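/- Let V be a standard Borel space, P a Markov kernel on V, η* an invariant probability measure for P, and λ a probability measure on V such that the mean ergodic Cesàro convergence holds at the level of one-dimensional marginals: for every bounded measurable g : V → ℝ, (1/T) Σ_{k=0}^{T−1} ∫ g d(λP^k) → ∫ g dη* as T → ∞. Then the Cesàro convergence extends to all finite-dimensional cylinder events of the path process: for every m ≥ 0 and every measurable set A ⊆ V^{m+1}, lim_{T→∞} (1/T) Σ_{k=0}^{T−1} ℙ_λ{ω : (ω_k, ω_{k+1}, …, ω_{k+m}) ∈ A} = ℙ_{η*}{ω : (ω_0, ω_1, …, ω_m) ∈ A}; equivalently, (1/T) Σ_{k=0}^{T−1} ℙ_λ(θ^{−k}B) → ℙ_{η*}(B) for every measurable cylinder set B ⊆ V^ℕ depending on finitely many coordinates. -/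

import Mathlib

open MeasureTheory ProbabilityTheory Filter
open scoped ENNReal NNReal

/-- The `k`-fold iterate `λP^k` of a probability measure under a Markov kernel. -/
noncomputable def iterBind {V : Type*} [MeasurableSpace V] (P : Kernel V V)
    (lam : Measure V) (k : ℕ) : Measure V :=
  (fun m : Measure V => m.bind ⇑P)^[k] lam

/-- The law of `(ω_0, …, ω_n)` for the Markov chain with transition kernel `P` and
initial distribution `lam`: `finLaw P lam 0 = lam` and
`finLaw P lam (n+1) = (finLaw P lam n) ⊗ P` (the next coordinate drawn from `P` applied
to the last coordinate). -/
noncomputable def finLaw {V : Type*} [MeasurableSpace V] (P : Kernel V V)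
    (lam : Measure V) : (n : ℕ) → Measure (Fin (n + 1) → V)
  | 0 => lam.map (fun v _ => v)
  | n + 1 =>
      ((finLaw P lam n) ⊗ₘ (P.comap (fun ω => ω (Fin.last n)) (measurable_pi_apply _))).map
        (fun p => Fin.snoc p.1 p.2)

/-!
By the Markov property, the law of `(ω_k, …, ω_{k+m})` under `ℙ_λ` is the law of
`(ω_0, …, ω_m)` under `ℙ_{λP^k}`, i.e. `∫ ℙ_v((ω_0, …, ω_m) ∈ A) d(λP^k)(v)`, where `ℙ_v` is the
path law started at `v`. So the Cesàro averages of cylinder probabilities are the Cesàro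
averages of the one-dimensional marginals tested against the bounded measurable function
`g v = ℙ_v((ω_0, …, ω_m) ∈ A)`, and the hypothesis applied to `g` gives the limit
`∫ g dη* = ℙ_{η*}((ω_0, …, ω_m) ∈ A)`.
-/

namespace MeasureTheory.Measure

variable {α β γ : Type*} [MeasurableSpace α] [MeasurableSpace β] [MeasurableSpace γ]

lemma compProd_comap_map (μ : Measure α) [SFinite μ] (κ : Kernel β γ) [IsSFiniteKernel κ]
    {f : α → β} (hf : Measurable f) :
    (μ ⊗ₘ κ.comap f hf).map (Prod.map f id) = μ.map f ⊗ₘ κ := by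
  ext s hs
  rw [map_apply (hf.prodMap measurable_id) hs, compProd_apply ((hf.prodMap measurable_id) hs),
    compProd_apply hs, lintegral_map (Kernel.measurable_kernel_prodMk_left hs) hf]
  rfl

lemma comp_map (μ : Measure α) (κ : Kernel β γ) {f : α → β} (hf : Measurable f) :
    κ ∘ₘ μ.map f = κ.comap f hf ∘ₘ μ := by
  rw [← deterministic_comp_eq_map hf, comp_assoc, Kernel.comp_deterministic_eq_comap]

end MeasureTheory.Measure

section

variable {V : Type*} [MeasurableSpace V] (P : Kernel V V) (lam : Measure V)

lemma measurable_fin_snoc {n : ℕ} :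
    Measurable (fun p : (Fin n → V) × V => (Fin.snoc p.1 p.2 : Fin (n + 1) → V)) := by
  refine measurable_pi_lambda _ fun i => ?_
  induction i using Fin.lastCases with
  | last => simpa using measurable_snd
  | cast j => simpa [Function.comp_def] using (measurable_pi_apply j).comp measurable_fst

@[simp]
lemma iterBind_zero : iterBind P lam 0 = lam := rfl

lemma iterBind_succ (k : ℕ) : iterBind P lam (k + 1) = P ∘ₘ iterBind P lam k :=
  Function.iterate_succ_apply' _ k lam

instance [IsSFiniteKernel P] [SFinite lam] (k : ℕ) : SFinite (iterBind P lam k) := by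
  induction k with
  | zero => exact ‹_›
  | succ k ih => rw [iterBind_succ]; infer_instance

instance [IsSFiniteKernel P] [SFinite lam] (n : ℕ) : SFinite (finLaw P lam n) := by
  cases n <;> rw [finLaw] <;> infer_instance

lemma finLaw_map_last [IsSFiniteKernel P] [SFinite lam] (n : ℕ) :
    (finLaw P lam n).map (fun x => x (Fin.last n)) = iterBind P lam n := by
  induction n with
  | zero =>
    rw [finLaw, Measure.map_map (measurable_pi_apply _) (by fun_prop)]
    exact Measure.map_id
  | succ n ih =>
    rw [finLaw, Measure.map_map (measurable_pi_apply _) measurable_fin_snoc]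
    simp only [Function.comp_def, Fin.snoc_last]
    rw [← Measure.snd, Measure.snd_compProd, ← Measure.comp_map _ _ (measurable_pi_apply _), ih,
      iterBind_succ]

lemma finLaw_map_natAdd [IsSFiniteKernel P] [SFinite lam] (k n : ℕ) :
    (finLaw P lam (k + n)).map (fun x (i : Fin (n + 1)) => x (Fin.natAdd k i))
      = finLaw P (iterBind P lam k) n := by
  have hdrop : ∀ n, Measurable
      (fun (x : Fin (k + n + 1) → V) (i : Fin (n + 1)) => x (Fin.natAdd k i)) :=
    fun _ => by fun_prop
  induction n with
  | zero =>
    rw [finLaw, ← finLaw_map_last,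
      Measure.map_map (g := fun v (_ : Fin (0 + 1)) => v)
        (f := fun x : Fin (k + 1) → V => x (Fin.last k)) (by fun_prop) (by fun_prop)]
    congr 1
    funext x i
    rw [Fin.fin_one_eq_zero i]
    rfl
  | succ n ih =>
    have hsnoc : (fun (x : Fin (k + n + 1 + 1) → V) (i : Fin (n + 1 + 1)) => x (Fin.natAdd k i))
          ∘ (fun p : (Fin (k + n + 1) → V) × V => Fin.snoc p.1 p.2)
        = (fun p : (Fin (n + 1) → V) × V => (Fin.snoc p.1 p.2 : Fin (n + 2) → V))
          ∘ Prod.map (fun x (i : Fin (n + 1)) => x (Fin.natAdd k i)) id := by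
      funext p
      exact Fin.snoc_comp_natAdd (m := k) (n := n + 1) p.1 p.2
    -- `finLaw` unfolds only at `k + n + 1`, which is `k + (n + 1)` just up to defeq
    change Measure.map (fun (x : Fin (k + n + 1 + 1) → V) (i : Fin (n + 1 + 1)) =>
      x (Fin.natAdd k i)) (finLaw P lam (k + n + 1)) = _
    rw [finLaw, finLaw, ← ih, ← Measure.compProd_comap_map _ _ (hdrop n),
      Measure.map_map measurable_fin_snoc ((hdrop n).prodMap measurable_id)]
    erw [Measure.map_map (hdrop (n + 1)) measurable_fin_snoc]
    exact congrArg (fun f => Measure.map f _) hsnoc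

noncomputable def pathKernel : (n : ℕ) → Kernel V (Fin (n + 1) → V)
  | 0 => Kernel.deterministic (fun v _ => v) (by fun_prop)
  | n + 1 =>
      ((pathKernel n) ⊗ₖ
        (P.comap (fun x => x (Fin.last n)) (measurable_pi_apply _)).prodMkLeft V).map
        (fun p => Fin.snoc p.1 p.2)

instance [IsSFiniteKernel P] (n : ℕ) : IsSFiniteKernel (pathKernel P n) := by
  induction n with
  | zero => rw [pathKernel]; infer_instance
  | succ n ih => rw [pathKernel]; infer_instance

instance [IsMarkovKernel P] (n : ℕ) : IsMarkovKernel (pathKernel P n) := by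
  induction n with
  | zero => rw [pathKernel]; infer_instance
  | succ n ih => rw [pathKernel]; exact Kernel.IsMarkovKernel.map _ measurable_fin_snoc

lemma finLaw_eq_comp [IsSFiniteKernel P] [SFinite lam] (n : ℕ) :
    finLaw P lam n = pathKernel P n ∘ₘ lam := by
  induction n with
  | zero => exact (Measure.deterministic_comp_eq_map _).symm
  | succ n ih =>
    rw [finLaw, pathKernel, ← Measure.map_comp _ _ measurable_fin_snoc,
      Kernel.compProd_prodMkLeft_eq_comp, ← Measure.comp_assoc, ← Measure.compProd_eq_comp_prod,
      ih]

lemma measure_shifted_cylinder [IsSFiniteKernel P] [SFinite lam] {Q : Measure (ℕ → V)}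
    (hQ : ∀ n : ℕ, Q.map (fun ω (i : Fin (n + 1)) => ω i) = finLaw P lam n) (k : ℕ) {m : ℕ}
    {A : Set (Fin (m + 1) → V)} (hA : MeasurableSet A) :
    Q {ω | (fun i : Fin (m + 1) => ω (k + i)) ∈ A} = finLaw P (iterBind P lam k) m A := by
  have hdrop : Measurable
      (fun (x : Fin (k + m + 1) → V) (i : Fin (m + 1)) => x (Fin.natAdd k i)) := by
    fun_prop
  rw [← finLaw_map_natAdd, Measure.map_apply hdrop hA, ← hQ,
    Measure.map_apply (by fun_prop) (hdrop hA)]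
  rfl

lemma toReal_finLaw_apply_eq_integral [IsMarkovKernel P] [SFinite lam] {n : ℕ}
    {A : Set (Fin (n + 1) → V)} (hA : MeasurableSet A) :
    (finLaw P lam n A).toReal = ∫ v, (pathKernel P n v A).toReal ∂lam := by
  rw [integral_toReal ((pathKernel P n).measurable_coe hA).aemeasurable
      (ae_of_all _ fun v => measure_lt_top _ _),
    finLaw_eq_comp, Measure.bind_apply hA (pathKernel P n).aemeasurable]

end

theorem cesaro_cylinder_convergence
    {V : Type*} [MeasurableSpace V]
    (P : Kernel V V) [IsMarkovKernel P]
    (η : Measure V) [IsProbabilityMeasure η]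
    (lam : Measure V) [IsProbabilityMeasure lam]
    (hmean : ∀ g : V → ℝ, Measurable g → (∃ C : ℝ, ∀ v, |g v| ≤ C) →
      Tendsto (fun T : ℕ => (1 / T : ℝ) * ∑ k ∈ Finset.range T, ∫ v, g v ∂(iterBind P lam k))
        atTop (nhds (∫ v, g v ∂η)))
    (Qlam : Measure (ℕ → V))
    (hQlam : ∀ n : ℕ, Qlam.map (fun ω (i : Fin (n + 1)) => ω (i : ℕ)) = finLaw P lam n)
    (Qeta : Measure (ℕ → V))
    (hQeta : ∀ n : ℕ, Qeta.map (fun ω (i : Fin (n + 1)) => ω (i : ℕ)) = finLaw P η n) :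
    ∀ (m : ℕ) (A : Set (Fin (m + 1) → V)), MeasurableSet A →
      Tendsto (fun T : ℕ => (1 / T : ℝ) * ∑ k ∈ Finset.range T,
          (Qlam {ω | (fun i : Fin (m + 1) => ω (k + (i : ℕ))) ∈ A}).toReal)
        atTop (nhds ((Qeta {ω | (fun i : Fin (m + 1) => ω (i : ℕ)) ∈ A}).toReal)) := by
  intro m A hA
  have hstart : Qeta {ω | (fun i : Fin (m + 1) => ω i) ∈ A} = finLaw P η m A := by
    simpa using measure_shifted_cylinder P η hQeta 0 hA
  have hbound : ∀ v, |(pathKernel P m v A).toReal| ≤ 1 := fun v => by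
    simpa using ENNReal.toReal_mono ENNReal.one_ne_top prob_le_one
  simp_rw [hstart, measure_shifted_cylinder P lam hQlam _ hA, toReal_finLaw_apply_eq_integral P _ hA]
  exact hmean _ ((pathKernel P m).measurable_coe hA).ennreal_toReal ⟨1, hbound⟩
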